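/- Indistinguishability of one ciphertext of bit 1 together with t−1 public-key copies from the maximally mixed state: for n ≥ 1 and t ≥ 1, D( (1/2^{n−1}) Σ_{k ∈ Ω_n} T_k , ((1/2^n)·1)^{⊗t} ) < √(2^t / 2^{n+1}), where T_k is the tensor product of the family that equals ρ_k^1 in the first slot and ρ_k^0 in the remaining t−1 slots. -/

import Mathlib

open Matrix Finset ComplexOrder

/-- Hamming weight of a bit string. -/
def hammingW {n : ℕ} (ν : Fin n → ZMod 2) : ℕ :=
  (Finset.univ.filter fun l => ν l = 1).card

/-- `Ω_n`: the bit strings of length `n` with odd Hamming weight. -/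
def Omega (n : ℕ) : Finset (Fin n → ZMod 2) :=
  Finset.univ.filter fun k => Odd (hammingW k)

/-- The public-key state `ρ_k^0`. -/
noncomputable def rho0 (n : ℕ) (k : Fin n → ZMod 2) :
    Matrix (Fin n → ZMod 2) (Fin n → ZMod 2) ℂ :=
  (1 / 2 ^ n : ℂ) •
    ∑ i : Fin n → ZMod 2, ∑ x : ZMod 2, Matrix.single i (i + x • k) (1 : ℂ)

/-- The ciphertext state `ρ_k^1` of the bit `1`. -/
noncomputable def rho1 (n : ℕ) (k : Fin n → ZMod 2) :
    Matrix (Fin n → ZMod 2) (Fin n → ZMod 2) ℂ :=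
  (1 / 2 ^ n : ℂ) •
    ∑ i : Fin n → ZMod 2, ∑ x : ZMod 2,
      ((-1 : ℂ) ^ x.val) • Matrix.single i (i + x • k) (1 : ℂ)

/-- Tensor product of a `t`-indexed family of matrices over index type `m`. -/
def tensT {t : ℕ} {m : Type*} [Fintype m] (ρ : Fin t → Matrix m m ℂ) :
    Matrix (Fin t → m) (Fin t → m) ℂ :=
  Matrix.of fun u v => ∏ s, ρ s (u s) (v s)

/-- `|A|` is the positive semidefinite square root of `AᴴA`. -/
noncomputable def matAbs {m : Type*} [Fintype m] [DecidableEq m] (A : Matrix m m ℂ) :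
    Matrix m m ℂ :=
  (Matrix.posSemidef_conjTranspose_mul_self A).1.eigenvectorUnitary.1 *
    Matrix.diagonal ((↑) ∘ Real.sqrt ∘ (Matrix.posSemidef_conjTranspose_mul_self A).1.eigenvalues) *
    (star (Matrix.posSemidef_conjTranspose_mul_self A).1.eigenvectorUnitary : Matrix m m ℂ)

/-- The trace norm `‖A‖_tr = tr |A|` (a real number). -/
noncomputable def traceNorm {m : Type*} [Fintype m] [DecidableEq m] (A : Matrix m m ℂ) : ℝ :=
  (matAbs A).trace.re

/-!
All matrices involved are translation invariant on the group `(ℤ/2)^{nt}`: their `(u, v)`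
entry depends only on `v - u`, through a real symbol. For `ρ_k^e` this symbol is
`2^{-n} ([w = 0] + e [w = k])`, so the symbol of the difference `Δ` of the two states is
`2^{-(n-1)} 2^{-nt} ∑_{k ∈ Ω_n} Q_k`, where `Q_k` is the symbol of `2^{nt} T_k - 1`; the
identity is absorbed because `|Ω_n| = 2^{n-1}`. Symbols of tensor products factor over the
slots, so `∑_w T_k T_{k'} = ∏_s (1 + e_s² [k = k'])` (as `k, k' ≠ 0`, their weight being odd):
the `Q_k` are orthogonal with squared norm `2^t - 1`, the sign of the ciphertext slot
disappearing. Hence `‖Δ‖_F² = (2^t - 1) / (2^{n-1} 2^{nt})`, and Cauchy–Schwarz on the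
singular values, `‖Δ‖_tr ≤ √(2^{nt}) ‖Δ‖_F`, gives `D ≤ √((2^t - 1) / 2^{n+1})`.
-/

section TraceNorm

variable {m : Type*} [Fintype m]

lemma re_trace_conjTranspose_mul_self (A : Matrix m m ℂ) :
    (Aᴴ * A).trace.re = ∑ i, ∑ j, ‖A i j‖ ^ 2 := by
  simp only [trace, diag_apply, mul_apply, conjTranspose_apply, Complex.re_sum]
  rw [Finset.sum_comm]
  refine Finset.sum_congr rfl fun i _ => Finset.sum_congr rfl fun j _ => ?_
  rw [Complex.star_def, Complex.conj_mul', ← Complex.ofReal_pow, Complex.ofReal_re]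

variable [DecidableEq m]

lemma traceNorm_eq_sum_sqrt_eigenvalues (A : Matrix m m ℂ) :
    traceNorm A =
      ∑ i, √((posSemidef_conjTranspose_mul_self A).isHermitian.eigenvalues i) := by
  simp [traceNorm, matAbs, trace_mul_cycle, trace_diagonal, Complex.re_sum]

lemma traceNorm_le_sqrt_card_mul_sum_norm_sq (A : Matrix m m ℂ) :
    traceNorm A ≤ √(Fintype.card m * ∑ i, ∑ j, ‖A i j‖ ^ 2) := by
  have hA := posSemidef_conjTranspose_mul_self A
  have hsq : ∑ i, ∑ j, ‖A i j‖ ^ 2 = ∑ i, √(hA.isHermitian.eigenvalues i) ^ 2 := by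
    rw [← re_trace_conjTranspose_mul_self, hA.isHermitian.trace_eq_sum_eigenvalues]
    simp [Complex.re_sum, Real.sq_sqrt (hA.eigenvalues_nonneg _)]
  rw [traceNorm_eq_sum_sqrt_eigenvalues, hsq]
  exact Real.le_sqrt_of_sq_le (sq_sum_le_card_mul_sum_sq ..)

end TraceNorm

section TranslationInvariant

variable {G : Type*} [AddCommGroup G] [Fintype G]

lemma sum_sum_apply_sub (F : G → ℝ) :
    ∑ u, ∑ v, F (v - u) = Fintype.card G * ∑ w, F w := by
  have h (u : G) : ∑ v, F (v - u) = ∑ w, F w := (Equiv.subRight u).sum_comp F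
  simp [h]

variable [DecidableEq G]

lemma traceNorm_le_of_apply_eq_sub (A : Matrix G G ℂ) (g : G → ℝ)
    (hA : ∀ u v, A u v = g (v - u)) :
    traceNorm A ≤ Fintype.card G * √(∑ w, g w ^ 2) := by
  have hsq : ∑ u, ∑ v, ‖A u v‖ ^ 2 = Fintype.card G * ∑ w, g w ^ 2 := by
    simp only [hA, Complex.norm_real, Real.norm_eq_abs, sq_abs]
    exact sum_sum_apply_sub fun w => g w ^ 2
  calc traceNorm A ≤ √(Fintype.card G * (Fintype.card G * ∑ w, g w ^ 2)) := by
        rw [← hsq]; exact traceNorm_le_sqrt_card_mul_sum_norm_sq A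
    _ = Fintype.card G * √(∑ w, g w ^ 2) := by
        rw [← mul_assoc, Real.sqrt_mul (by positivity), Real.sqrt_mul_self (by positivity)]

lemma sum_single_add_apply (d : G) (c : ℂ) (a b : G) :
    (∑ i, single i (i + d) c) a b = if b - a = d then c else 0 := by
  simp [Matrix.sum_apply, single_apply, ite_and, eq_sub_iff_add_eq', eq_comm]

lemma sum_sum_single_add_smul_apply [Module (ZMod 2) G] (k : G) (c : ZMod 2 → ℂ) (a b : G) :
    (∑ i, ∑ x : ZMod 2, single i (i + x • k) (c x)) a b =
      (if b - a = 0 then c 0 else 0) + if b - a = k then c 1 else 0 := by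
  rw [Finset.sum_comm, Matrix.sum_apply, show (univ : Finset (ZMod 2)) = {0, 1} from rfl,
    Finset.sum_pair zero_ne_one, sum_single_add_apply, sum_single_add_apply, zero_smul, one_smul]

end TranslationInvariant

section Symbol

variable {V : Type*} [Zero V] [DecidableEq V]

def rhoSymbol (e : ℝ) (k w : V) : ℝ :=
  (if w = 0 then 1 else 0) + e * if w = k then 1 else 0

lemma rhoSymbol_zero (e : ℝ) {k : V} (hk : k ≠ 0) : rhoSymbol e k 0 = 1 := by
  simp [rhoSymbol, hk.symm]

variable {ι : Type*} [Fintype ι]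

def tensorSymbol (e : ι → ℝ) (k : V) (w : ι → V) : ℝ :=
  ∏ s, rhoSymbol (e s) k (w s)

lemma tensorSymbol_zero (e : ι → ℝ) {k : V} (hk : k ≠ 0) : tensorSymbol e k 0 = 1 := by
  simp [tensorSymbol, rhoSymbol_zero _ hk]

def centeredSymbol (e : ι → ℝ) (k : V) (w : ι → V) : ℝ :=
  tensorSymbol e k w - if w = 0 then 1 else 0

variable [Fintype V]

lemma sum_rhoSymbol_mul_rhoSymbol (e e' : ℝ) {k k' : V} (hk : k ≠ 0) (hk' : k' ≠ 0) :
    ∑ w, rhoSymbol e k w * rhoSymbol e' k' w = 1 + e * e' * if k = k' then 1 else 0 := by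
  simp [rhoSymbol, add_mul, mul_add, ite_mul, mul_ite, Finset.sum_add_distrib, hk, hk',
    Finset.sum_ite_eq', eq_comm]

variable [DecidableEq ι]

lemma sum_tensorSymbol_mul_tensorSymbol {e : ι → ℝ} (he : ∀ s, e s * e s = 1) {k k' : V}
    (hk : k ≠ 0) (hk' : k' ≠ 0) :
    ∑ w, tensorSymbol e k w * tensorSymbol e k' w =
      if k = k' then 2 ^ Fintype.card ι else 1 := by
  simp_rw [tensorSymbol, ← Finset.prod_mul_distrib]
  rw [← Fintype.prod_sum fun s w => rhoSymbol (e s) k w * rhoSymbol (e s) k' w]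
  simp_rw [sum_rhoSymbol_mul_rhoSymbol _ _ hk hk', he]
  split_ifs <;> norm_num

lemma sum_centeredSymbol_mul_centeredSymbol {e : ι → ℝ} (he : ∀ s, e s * e s = 1) {k k' : V}
    (hk : k ≠ 0) (hk' : k' ≠ 0) :
    ∑ w, centeredSymbol e k w * centeredSymbol e k' w =
      if k = k' then 2 ^ Fintype.card ι - 1 else 0 := by
  have h := sum_tensorSymbol_mul_tensorSymbol he hk hk'
  simp only [centeredSymbol, mul_sub, sub_mul, ite_mul, one_mul, zero_mul, mul_ite, mul_one,
    mul_zero, Finset.sum_sub_distrib, h, Finset.sum_ite_eq', Finset.mem_univ, if_true,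
    tensorSymbol_zero e hk, tensorSymbol_zero e hk']
  split_ifs <;> ring

end Symbol

lemma sum_sq_sum_of_orthogonal {κ W : Type*} [DecidableEq κ] [Fintype W] (S : Finset κ)
    (Q : κ → W → ℝ) (c : ℝ)
    (h : ∀ k ∈ S, ∀ k' ∈ S, ∑ w, Q k w * Q k' w = if k = k' then c else 0) :
    ∑ w, (∑ k ∈ S, Q k w) ^ 2 = #S * c := by
  calc ∑ w, (∑ k ∈ S, Q k w) ^ 2 = ∑ k ∈ S, ∑ k' ∈ S, ∑ w, Q k w * Q k' w := by
        simp_rw [sq, Finset.sum_mul_sum]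
        rw [Finset.sum_comm]
        exact Finset.sum_congr rfl fun k _ => Finset.sum_comm
    _ = ∑ k ∈ S, c := Finset.sum_congr rfl fun k hk => by
        rw [Finset.sum_congr rfl (h k hk), Finset.sum_ite_eq S k, if_pos hk]
    _ = #S * c := by simp

lemma mem_Omega_iff {n : ℕ} {k : Fin n → ZMod 2} : k ∈ Omega n ↔ ∑ l, k l = 1 := by
  have hcast : (hammingW k : ZMod 2) = ∑ l, k l := by
    rw [hammingW, Finset.card_filter]
    push_cast
    exact Finset.sum_congr rfl fun l _ => by generalize k l = x; revert x; decide
  rw [Omega, Finset.mem_filter, ← ZMod.natCast_eq_one_iff_odd, hcast]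
  simp

lemma ne_zero_of_mem_Omega {n : ℕ} {k : Fin n → ZMod 2} (hk : k ∈ Omega n) : k ≠ 0 := by
  rintro rfl
  simp [mem_Omega_iff] at hk

lemma card_Omega (m : ℕ) : #(Omega (m + 1)) = 2 ^ m := by
  have hsum (x : ZMod 2) (w : Fin m → ZMod 2) :
      ∑ l, (Fin.cons x w : Fin (m + 1) → ZMod 2) l = x + ∑ l, w l := by
    simp [Fin.sum_univ_succ]
  -- an odd-weight string is determined by its tail
  rw [show 2 ^ m = #(univ : Finset (Fin m → ZMod 2)) by simp]
  refine Finset.card_bij' (fun k _ => Fin.tail k) (fun w _ => Fin.cons (1 - ∑ l, w l) w)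
    (fun _ _ => Finset.mem_univ _) (fun w _ => ?_) (fun k hk => ?_) (fun w _ => Fin.tail_cons _ _)
  · rw [mem_Omega_iff, hsum, sub_add_cancel]
  · rw [mem_Omega_iff, ← Fin.cons_self_tail k, hsum] at hk
    conv_rhs => rw [← Fin.cons_self_tail k]
    rw [← hk, add_sub_cancel_right]

lemma rho0_apply (n : ℕ) (k a b : Fin n → ZMod 2) :
    rho0 n k a b = ((2 ^ n)⁻¹ * rhoSymbol 1 k (b - a) : ℝ) := by
  rw [rho0, Matrix.smul_apply, sum_sum_single_add_smul_apply k fun _ => 1]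
  unfold rhoSymbol
  split_ifs <;> simp

lemma rho1_apply (n : ℕ) (k a b : Fin n → ZMod 2) :
    rho1 n k a b = ((2 ^ n)⁻¹ * rhoSymbol (-1) k (b - a) : ℝ) := by
  simp only [rho1, smul_single, smul_eq_mul, mul_one]
  rw [Matrix.smul_apply, sum_sum_single_add_smul_apply k fun x => (-1) ^ x.val]
  unfold rhoSymbol
  split_ifs <;> simp [show (1 : ZMod 2).val = 1 from rfl]

lemma tensT_apply_of_apply_eq_rhoSymbol {t : ℕ} {G : Type*} [AddCommGroup G] [Fintype G]
    [DecidableEq G] (ρ : Fin t → Matrix G G ℂ) (c : ℝ) (e : Fin t → ℝ) (k : G)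
    (hρ : ∀ s a b, ρ s a b = (c * rhoSymbol (e s) k (b - a) : ℝ)) (u v : Fin t → G) :
    tensT ρ u v = (c ^ t * tensorSymbol e k (v - u) : ℝ) := by
  simp [tensT, hρ, tensorSymbol, Finset.prod_mul_distrib]

lemma tensT_smul_one {t : ℕ} {G : Type*} [Fintype G] [DecidableEq G] (c : ℂ) :
    tensT (fun _ : Fin t => c • (1 : Matrix G G ℂ)) = c ^ t • 1 := by
  ext u v
  simp [tensT, one_apply, Finset.prod_ite_zero, funext_iff]

def ciphertextSigns (t : ℕ) (s : Fin t) : ℝ := if s.val = 0 then -1 else 1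

lemma ciphertextSigns_mul_self (t : ℕ) (s : Fin t) :
    ciphertextSigns t s * ciphertextSigns t s = 1 := by
  unfold ciphertextSigns; split_ifs <;> norm_num

lemma tensT_ciphertext_apply (n t : ℕ) (k : Fin n → ZMod 2) (u v : Fin t → Fin n → ZMod 2) :
    tensT (fun s : Fin t => if s.val = 0 then rho1 n k else rho0 n k) u v =
      (((2 ^ n)⁻¹) ^ t * tensorSymbol (ciphertextSigns t) k (v - u) : ℝ) :=
  tensT_apply_of_apply_eq_rhoSymbol _ _ _ k
    (fun s a b => by unfold ciphertextSigns; split_ifs <;> simp [rho0_apply, rho1_apply]) u v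

noncomputable def mixedCiphertext (n t : ℕ) :
    Matrix (Fin t → Fin n → ZMod 2) (Fin t → Fin n → ZMod 2) ℂ :=
  (1 / 2 ^ (n - 1) : ℂ) • ∑ k ∈ Omega n,
    tensT (fun s : Fin t => if s.val = 0 then rho1 n k else rho0 n k)

noncomputable def maximallyMixed (n t : ℕ) :
    Matrix (Fin t → Fin n → ZMod 2) (Fin t → Fin n → ZMod 2) ℂ :=
  tensT (fun _ : Fin t => (1 / 2 ^ n : ℂ) • (1 : Matrix (Fin n → ZMod 2) (Fin n → ZMod 2) ℂ))

lemma mixedCiphertext_sub_maximallyMixed_apply (m t : ℕ)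
    (u v : Fin t → Fin (m + 1) → ZMod 2) :
    (mixedCiphertext (m + 1) t - maximallyMixed (m + 1) t) u v =
      ((2 ^ m)⁻¹ * ((2 ^ (m + 1))⁻¹) ^ t *
        ∑ k ∈ Omega (m + 1), centeredSymbol (ciphertextSigns t) k (v - u) : ℝ) := by
  simp only [mixedCiphertext, maximallyMixed, tensT_smul_one, Matrix.sub_apply,
    Matrix.smul_apply, Matrix.sum_apply, tensT_ciphertext_apply, Matrix.one_apply, smul_eq_mul]
  simp only [centeredSymbol, Finset.sum_sub_distrib, Finset.sum_const, card_Omega, sub_eq_zero,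
    eq_comm (a := v)]
  push_cast
  simp only [← Finset.mul_sum]
  split_ifs <;> field_simp <;> push_cast <;> ring

lemma traceNorm_mixedCiphertext_sub_maximallyMixed_le (m t : ℕ) :
    traceNorm (mixedCiphertext (m + 1) t - maximallyMixed (m + 1) t) ≤
      √((2 ^ t - 1) / 2 ^ m) := by
  have horth := sum_sq_sum_of_orthogonal (Omega (m + 1))
    (centeredSymbol (ciphertextSigns t)) (2 ^ t - 1) fun k hk k' hk' => by
      simpa using sum_centeredSymbol_mul_centeredSymbol (ciphertextSigns_mul_self t)
        (ne_zero_of_mem_Omega hk) (ne_zero_of_mem_Omega hk')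
  refine (traceNorm_le_of_apply_eq_sub _ (fun w => (2 ^ m)⁻¹ * ((2 ^ (m + 1))⁻¹) ^ t *
    ∑ k ∈ Omega (m + 1), centeredSymbol (ciphertextSigns t) k w)
    (mixedCiphertext_sub_maximallyMixed_apply m t)).trans_eq ?_
  have hcard : (Fintype.card (Fin t → Fin (m + 1) → ZMod 2) : ℝ) = (2 ^ (m + 1)) ^ t := by
    simp
  simp_rw [mul_pow _ (∑ k ∈ _, _), ← Finset.mul_sum, horth, card_Omega, hcard]
  rw [← Real.sqrt_sq (by positivity : (0 : ℝ) ≤ (2 ^ (m + 1)) ^ t),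
    ← Real.sqrt_mul (by positivity)]
  congr 1
  push_cast [inv_pow]
  field_simp

theorem ciphertext_and_copies_indistinguishable_general (n t : ℕ) (hn : 1 ≤ n) :
    (1 / 2) * traceNorm
        (((1 / 2 ^ (n - 1) : ℂ) • ∑ k ∈ Omega n,
              tensT (fun s : Fin t => if s.val = 0 then rho1 n k else rho0 n k))
          - tensT (fun _ : Fin t =>
              (1 / 2 ^ n : ℂ) • (1 : Matrix (Fin n → ZMod 2) (Fin n → ZMod 2) ℂ)))
      < Real.sqrt (2 ^ t / 2 ^ (n + 1)) := by
  obtain ⟨m, rfl⟩ := Nat.exists_eq_add_of_le' hn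
  calc (1 / 2) * traceNorm (mixedCiphertext (m + 1) t - maximallyMixed (m + 1) t)
      ≤ √(1 / 4) * √((2 ^ t - 1) / 2 ^ m) := by
        rw [show √(1 / 4 : ℝ) = 1 / 2 by rw [Real.sqrt_eq_iff_mul_self_eq] <;> norm_num]
        gcongr
        exact traceNorm_mixedCiphertext_sub_maximallyMixed_le m t
    _ < √(2 ^ t / 2 ^ (m + 1 + 1)) := by
        rw [← Real.sqrt_mul (by norm_num)]
        apply Real.sqrt_lt_sqrt
        · have : (1 : ℝ) ≤ 2 ^ t := one_le_pow₀ (by norm_num)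
          positivity
        · rw [pow_succ, pow_succ]
          field_simp
          linarith

/-- One ciphertext of the bit `1` together with `t − 1` public-key copies is
indistinguishable from the maximally mixed state. -/
theorem ciphertext_and_copies_indistinguishable (n t : ℕ) (hn : 1 ≤ n) (ht : 1 ≤ t) :
    (1 / 2) * traceNorm
        (((1 / 2 ^ (n - 1) : ℂ) • ∑ k ∈ Omega n,
              tensT (fun s : Fin t => if s.val = 0 then rho1 n k else rho0 n k))
          - tensT (fun _ : Fin t =>
              (1 / 2 ^ n : ℂ) • (1 : Matrix (Fin n → ZMod 2) (Fin n → ZMod 2) ℂ)))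
      < Real.sqrt (2 ^ t / 2 ^ (n + 1)) :=
  ciphertext_and_copies_indistinguishable_general n t hn
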